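/- arXiv:math/0304091 — 2 statements merged into one kernel-verified Lean document; each statement's English description precedes it below -/
import Mathlib

section
/- The annealed law P^μ of a random walk in an iid random environment coincides with the law P^V of the edge-oriented reinforced random walk whose reinforcement function V satisfies V_e(n⃗) = E[ν_e ∏_{g∈G} ν_g^{n_g}] / E[∏_{g∈G} ν_g^{n_g}] for every n⃗ = (n_g)_{g∈G} with finitely many nonzero terms such that E[∏_{g∈G} ν_g^{n_g}] > 0. -/
open MeasureTheory ProbabilityTheory Filter

/-- Number of jumps of size `g` from site `x` made by the walk `X` before time `n`. -/
def jumpCount {G Ω : Type*} [AddCommGroup G] [DecidableEq G]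
    (X : ℕ → Ω → G) (g x : G) (n : ℕ) (ω : Ω) : ℕ :=
  ((Finset.range n).filter (fun l => X l ω = x ∧ X (l + 1) ω = X l ω + g)).card

/-- The ordered history of site `x` at time `n`: the successive jumps made from `x`. -/
def orderedHistory {G Ω : Type*} [AddCommGroup G] [DecidableEq G]
    (X : ℕ → Ω → G) (x : G) (n : ℕ) (ω : Ω) : List G :=
  ((List.range n).filter (fun l => decide (X l ω = x))).map (fun l => X (l + 1) ω - X l ω)

/-- The σ-algebra generated by the whole environment. -/
def envSigma {G Ω : Type*} [mΩ : MeasurableSpace Ω] (ν : G → G → Ω → ℝ) : MeasurableSpace Ω :=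
  ⨆ x : G, MeasurableSpace.comap (fun ω (e : G) => ν x e ω) inferInstance

/-- The natural filtration of the walk `X`. -/
def natFilt {G Ω : Type*} [MeasurableSpace G] [mΩ : MeasurableSpace Ω]
    (X : ℕ → Ω → G) (n : ℕ) : MeasurableSpace Ω :=
  ⨆ i ∈ Set.Iic n, MeasurableSpace.comap (X i) inferInstance

/-- `X` is a random walk in an iid random environment `ν` (with one-site marginal law μ),
under the annealed law `P`. -/
structure IsRWRE {G Ω : Type*} [AddCommGroup G] [Countable G] [MeasurableSpace G]
    [MeasurableSingletonClass G] [DecidableEq G] [mΩ : MeasurableSpace Ω]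
    (P : Measure Ω) (ν : G → G → Ω → ℝ) (X : ℕ → Ω → G) : Prop where
  meas_nu : ∀ x e, Measurable (ν x e)
  nonneg : ∀ x e ω, 0 ≤ ν x e ω
  sum_one : ∀ x ω, HasSum (fun e => ν x e ω) 1
  meas_X : ∀ n, Measurable (X n)
  start : ∀ ω, X 0 ω = 0
  indep_sites : iIndepFun (fun x ω e => ν x e ω) P
  ident_sites : ∀ x : G,
    Measure.map (fun ω (e : G) => ν x e ω) P = Measure.map (fun ω (e : G) => ν 0 e ω) P
  quenched : ∀ n (x e : G), ∀ᵐ ω ∂P, X n ω = x →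
    (P[Set.indicator {ω' | X (n + 1) ω' = x + e} (fun _ => (1 : ℝ)) |
        envSigma ν ⊔ natFilt X n]) ω = ν x e ω

/-- The moment `E[∏_g ν_g^{n_g}]` of the one-site environment. -/
noncomputable def envMoment {G Ω : Type*} [AddCommGroup G] [mΩ : MeasurableSpace Ω]
    (P : Measure Ω) (ν : G → G → Ω → ℝ) (nv : G → ℕ) : ℝ :=
  ∫ ω, (∏ᶠ g : G, ν 0 g ω ^ nv g) ∂P

/-- The moment `E[ν_e ∏_g ν_g^{n_g}]` of the one-site environment. -/
noncomputable def envMoment1 {G Ω : Type*} [AddCommGroup G] [mΩ : MeasurableSpace Ω]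
    (P : Measure Ω) (ν : G → G → Ω → ℝ) (nv : G → ℕ) (e : G) : ℝ :=
  ∫ ω, (ν 0 e ω * ∏ᶠ g : G, ν 0 g ω ^ nv g) ∂P

/-- The set `E` of possible jumps. -/
def Ejumps {G Ω : Type*} [AddCommGroup G] [mΩ : MeasurableSpace Ω] (P : Measure Ω) (ν : G → G → Ω → ℝ) :
    Set G :=
  {g | 0 < P {ω | 0 < ν 0 g ω}}

/-- The set `R ⊆ E` of returnable jumps. -/
def Rset {G Ω : Type*} [AddCommGroup G] [mΩ : MeasurableSpace Ω]
    (P : Measure Ω) (ν : G → G → Ω → ℝ) : Set G :=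
  {r ∈ Ejumps P ν | ∃ l : List G, l ≠ [] ∧ (∀ e ∈ l, e ∈ Ejumps P ν) ∧ r = -l.sum}

/-- The set of possible unordered histories. -/
def Nposs {G Ω : Type*} [AddCommGroup G] [mΩ : MeasurableSpace Ω]
    (P : Measure Ω) (ν : G → G → Ω → ℝ) : Set (G → ℕ) :=
  {nv | (Function.support nv).Finite ∧ (∀ g, nv g ≠ 0 → g ∈ Rset P ν) ∧ 0 < envMoment P ν nv}

/-- `X` is an edge-oriented reinforced random walk with reinforcement function `V` under `P`. -/
structure IsRRW {G Ω : Type*} [AddCommGroup G] [MeasurableSpace G]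
    [MeasurableSingletonClass G] [DecidableEq G] [mΩ : MeasurableSpace Ω]
    (P : Measure Ω) (V : (G → ℕ) → G → ℝ) (X : ℕ → Ω → G) : Prop where
  meas_X : ∀ n, Measurable (X n)
  start : ∀ ω, X 0 ω = 0
  step : ∀ n (e : G), ∀ᵐ ω ∂P,
    (P[Set.indicator {ω' | X (n + 1) ω' = X n ω' + e} (fun _ => (1 : ℝ)) | natFilt X n]) ω
      = V (fun g => jumpCount X g (X n ω) n ω) e

/-- The unordered history of the site currently occupied by `X` at time `n`. -/
def localHist {G Ω : Type*} [AddCommGroup G] [DecidableEq G]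
    (X : ℕ → Ω → G) (n : ℕ) (ω : Ω) : G → ℕ :=
  fun g => jumpCount X g (X n ω) n ω

/-- `τ(n)`: the number of times `j ≤ n` at which the local unordered history coincides with the
one at time `n`. -/
noncomputable def tauCount {G Ω : Type*} [AddCommGroup G] [DecidableEq G]
    (X : ℕ → Ω → G) (n : ℕ) (ω : Ω) : ℕ :=
  Nat.card {j : ℕ // j ≤ n ∧ localHist X j ω = localHist X n ω}

/-- `Δ_i^{n⃗}`: the jump performed at the `i`-th time at which the local unordered history
equals `nv` (the times being given by `T`). -/
def Delta {G Ω : Type*} [AddCommGroup G] [DecidableEq G]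
    (X : ℕ → Ω → G) (T : (G → ℕ) → ℕ → Ω → ℕ) (nv : G → ℕ) (i : ℕ) (ω : Ω) : G :=
  X (T nv i ω + 1) ω - X (T nv i ω) ω

/-- `T nv i` enumerates (strictly increasingly, and exhaustively) the successive times at which
the local unordered history of `X` equals `nv`, for each possible history `nv ∈ N_poss`. -/
def EnumTimes {G Ω : Type*} [AddCommGroup G] [DecidableEq G] [mΩ : MeasurableSpace Ω]
    (P : Measure Ω) (ν : G → G → Ω → ℝ) (X : ℕ → Ω → G)
    (T : (G → ℕ) → ℕ → Ω → ℕ) : Prop :=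
  ∀ nv ∈ Nposs P ν, ∀ᵐ ω ∂P,
    StrictMono (fun i => T nv i ω) ∧ (∀ i, localHist X (T nv i ω) ω = nv) ∧
    (∀ k, localHist X k ω = nv → ∃ i, T nv i ω = k)

/-- `V` is given on possible histories by the ratio-of-moments formula. -/
def Vformula {G Ω : Type*} [AddCommGroup G] [mΩ : MeasurableSpace Ω]
    (P : Measure Ω) (ν : G → G → Ω → ℝ) (V : (G → ℕ) → G → ℝ) : Prop :=
  ∀ nv ∈ Nposs P ν, ∀ e, V nv e = envMoment1 P ν nv e / envMoment P ν nv

section AuxRWRE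

open MeasureTheory ProbabilityTheory
set_option linter.unusedSectionVars false
set_option linter.unusedVariables false

variable {G Ω : Type*} [AddCommGroup G] [Countable G] [MeasurableSpace G]
    [MeasurableSingletonClass G] [DecidableEq G] [mΩ : MeasurableSpace Ω]

/-- Deterministic jump counts along a path. -/
def pathCount (a : ℕ → G) (n : ℕ) (y g : G) : ℕ :=
  ((Finset.range n).filter (fun l => a l = y ∧ a (l + 1) = a l + g)).card

/-- Cylinder events for a process. -/
def cylSet (X : ℕ → Ω → G) (a : ℕ → G) (n : ℕ) : Set Ω := {ω | ∀ k ≤ n, X k ω = a k}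

/-- Increment a multiplicity vector at `e`. -/
def incr (nv : G → ℕ) (e : G) : G → ℕ := fun g => if g = e then nv g + 1 else nv g

lemma measurableSet_G (s : Set G) : MeasurableSet s := s.to_countable.measurableSet

lemma integrable_of_bdd {P : Measure Ω} [IsFiniteMeasure P] {f : Ω → ℝ}
    (hf : Measurable f) (h0 : ∀ ω, 0 ≤ f ω) (h1 : ∀ ω, f ω ≤ 1) : Integrable f P :=
  ⟨hf.aestronglyMeasurable, HasFiniteIntegral.of_bounded (C := 1)
    (Filter.Eventually.of_forall fun ω => by
      rw [Real.norm_eq_abs, abs_of_nonneg (h0 ω)]; exact h1 ω)⟩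

lemma finprod_eq_prod_pow {nv : G → ℕ} {t : Finset G} (ht : ∀ g, nv g ≠ 0 → g ∈ t) (w : G → ℝ) :
    (∏ᶠ g, w g ^ nv g) = ∏ g ∈ t, w g ^ nv g := by
  refine finprod_eq_prod_of_mulSupport_subset _ ?_
  intro g hg
  simp only [Function.mem_mulSupport] at hg
  by_contra hgt
  have h0 : nv g = 0 := by
    by_contra h; exact hgt (Finset.mem_coe.mpr (ht g h))
  rw [h0, pow_zero] at hg
  exact hg rfl

variable (P : Measure Ω) (ν : G → G → Ω → ℝ)

lemma envMoment_eq {nv : G → ℕ} {t : Finset G} (ht : ∀ g, nv g ≠ 0 → g ∈ t) :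
    envMoment P ν nv = ∫ ω, ∏ g ∈ t, ν 0 g ω ^ nv g ∂P :=
  integral_congr_ae (Filter.Eventually.of_forall fun ω => finprod_eq_prod_pow ht _)

lemma envMoment1_eq {nv : G → ℕ} {t : Finset G} (ht : ∀ g, nv g ≠ 0 → g ∈ t) (e : G) :
    envMoment1 P ν nv e = ∫ ω, ν 0 e ω * ∏ g ∈ t, ν 0 g ω ^ nv g ∂P :=
  integral_congr_ae (Filter.Eventually.of_forall fun ω => by
    dsimp only; rw [finprod_eq_prod_pow ht])

lemma meas_prodpow (hm : ∀ e, Measurable (ν 0 e)) (nv : G → ℕ) (t : Finset G) :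
    Measurable (fun ω => ∏ g ∈ t, ν 0 g ω ^ nv g) :=
  Finset.measurable_prod _ (fun g _ => (hm g).pow_const _)

lemma prodpow_nonneg (h0 : ∀ e ω, 0 ≤ ν 0 e ω) (nv : G → ℕ) (t : Finset G) (ω : Ω) :
    0 ≤ ∏ g ∈ t, ν 0 g ω ^ nv g :=
  Finset.prod_nonneg fun g _ => pow_nonneg (h0 g ω) _

lemma prodpow_le_one (h0 : ∀ e ω, 0 ≤ ν 0 e ω) (h1 : ∀ e ω, ν 0 e ω ≤ 1)
    (nv : G → ℕ) (t : Finset G) (ω : Ω) :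
    (∏ g ∈ t, ν 0 g ω ^ nv g) ≤ 1 :=
  Finset.prod_le_one (fun g _ => pow_nonneg (h0 g ω) _)
    (fun g _ => pow_le_one₀ (h0 g ω) (h1 g ω))

lemma envMoment_nonneg (h0 : ∀ e ω, 0 ≤ ν 0 e ω) (nv : G → ℕ) :
    0 ≤ envMoment P ν nv :=
  integral_nonneg fun ω => finprod_nonneg fun g => pow_nonneg (h0 g ω) _

lemma envMoment_of_zero [IsProbabilityMeasure P] {nv : G → ℕ} (h : ∀ g, nv g = 0) :
    envMoment P ν nv = 1 := by
  rw [envMoment_eq P ν (t := (∅ : Finset G)) (fun g hg => absurd (h g) hg)]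
  simp

lemma envMoment1_eq_incr {nv : G → ℕ} (hfin : (Function.support nv).Finite) (e : G) :
    envMoment1 P ν nv e = envMoment P ν (incr nv e) := by
  classical
  set t : Finset G := insert e hfin.toFinset with htdef
  have ht : ∀ g, nv g ≠ 0 → g ∈ t := fun g hg =>
    Finset.mem_insert_of_mem (hfin.mem_toFinset.mpr hg)
  have ht' : ∀ g, incr nv e g ≠ 0 → g ∈ t := by
    intro g hg
    by_cases hge : g = e
    · exact hge ▸ Finset.mem_insert_self e _
    · exact ht g (by simpa [incr, hge] using hg)
  rw [envMoment_eq P ν ht', envMoment1_eq P ν ht e]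
  refine integral_congr_ae (Filter.Eventually.of_forall fun ω => ?_)
  dsimp only
  have he : e ∈ t := Finset.mem_insert_self e _
  rw [Finset.prod_eq_mul_prod_sdiff_singleton_of_mem he,
    Finset.prod_eq_mul_prod_sdiff_singleton_of_mem he (fun g => ν 0 g ω ^ incr nv e g)]
  have hcongr : ∀ g ∈ t \ {e}, ν 0 g ω ^ incr nv e g = ν 0 g ω ^ nv g := by
    intro g hg; rw [Finset.mem_sdiff, Finset.mem_singleton] at hg
    simp [incr, hg.2]
  rw [Finset.prod_congr rfl hcongr]
  have : incr nv e e = nv e + 1 := by simp [incr]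
  rw [this, pow_succ]
  ring

lemma envMoment_incr_le [IsFiniteMeasure P] (hm : ∀ e, Measurable (ν 0 e))
    (h0 : ∀ e ω, 0 ≤ ν 0 e ω) (h1 : ∀ e ω, ν 0 e ω ≤ 1)
    {nv : G → ℕ} (hfin : (Function.support nv).Finite) (e : G) :
    envMoment P ν (incr nv e) ≤ envMoment P ν nv := by
  rw [← envMoment1_eq_incr P ν hfin e]
  have ht : ∀ g, nv g ≠ 0 → g ∈ hfin.toFinset := fun g hg => hfin.mem_toFinset.mpr hg
  rw [envMoment1_eq P ν ht e, envMoment_eq P ν ht]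
  refine integral_mono ?_ ?_ ?_
  · exact integrable_of_bdd ((hm e).mul (meas_prodpow ν hm nv _))
      (fun ω => mul_nonneg (h0 e ω) (prodpow_nonneg ν h0 nv _ ω))
      (fun ω => mul_le_one₀ (h1 e ω) (prodpow_nonneg ν h0 nv _ ω)
        (prodpow_le_one ν h0 h1 nv _ ω))
  · exact integrable_of_bdd (meas_prodpow ν hm nv _)
      (prodpow_nonneg ν h0 nv _) (prodpow_le_one ν h0 h1 nv _)
  · intro ω
    exact mul_le_of_le_one_left (prodpow_nonneg ν h0 nv _ ω) (h1 e ω)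

end AuxRWRE
section AuxRWRE2

open MeasureTheory ProbabilityTheory
set_option linter.unusedSectionVars false
set_option linter.unusedVariables false

variable {G Ω : Type*} [AddCommGroup G] [Countable G] [MeasurableSpace G]
    [MeasurableSingletonClass G] [DecidableEq G] [mΩ : MeasurableSpace Ω]

lemma pathCount_support (a : ℕ → G) (n : ℕ) (y : G) :
    ∀ g, pathCount a n y g ≠ 0 → g ∈ (Finset.range n).image (fun k => a (k + 1) - a k) := by
  intro g hg
  unfold pathCount at hg
  obtain ⟨l, hl⟩ := Finset.card_ne_zero.mp hg
  rw [Finset.mem_filter, Finset.mem_range] at hl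
  exact Finset.mem_image.mpr ⟨l, Finset.mem_range.mpr hl.1, sub_eq_iff_eq_add'.mpr hl.2.2⟩

lemma pathCount_zero (a : ℕ → G) (y g : G) : pathCount a 0 y g = 0 := by
  simp [pathCount]

lemma pathCount_succ_ne (a : ℕ → G) (n : ℕ) (y : G) (hy : y ≠ a n) :
    pathCount a (n + 1) y = pathCount a n y := by
  funext g
  unfold pathCount
  rw [Finset.range_add_one, Finset.filter_insert, if_neg (fun h => hy h.1.symm)]

lemma pathCount_succ_self (a : ℕ → G) (n : ℕ) :
    pathCount a (n + 1) (a n) = incr (pathCount a n (a n)) (a (n + 1) - a n) := by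
  funext g
  unfold pathCount incr
  rw [Finset.range_add_one, Finset.filter_insert]
  by_cases hg : g = a (n + 1) - a n
  · subst hg
    rw [if_pos ⟨rfl, by abel⟩, if_pos rfl,
      Finset.card_insert_of_notMem (by simp)]
  · rw [if_neg, if_neg hg]
    intro h
    exact hg (sub_eq_iff_eq_add'.mpr h.2).symm

lemma pathCount_finite_support (a : ℕ → G) (n : ℕ) (y : G) :
    (Function.support (pathCount a n y)).Finite :=
  Set.Finite.subset (Finset.finite_toSet _)
    (fun g hg => Finset.mem_coe.mpr (pathCount_support a n y g hg))

variable (P : Measure Ω) (ν : G → G → Ω → ℝ)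

lemma telescopeV [IsProbabilityMeasure P]
    (hm : ∀ e, Measurable (ν 0 e)) (h0 : ∀ e ω, 0 ≤ ν 0 e ω) (h1 : ∀ e ω, ν 0 e ω ≤ 1)
    {V : (G → ℕ) → G → ℝ}
    (hV : ∀ nv : G → ℕ, (Function.support nv).Finite → 0 < envMoment P ν nv →
      ∀ e, V nv e = envMoment1 P ν nv e / envMoment P ν nv)
    (a : ℕ → G) :
    ∀ n (s : Finset G), (∀ k, k < n → a k ∈ s) →
      ∏ k ∈ Finset.range n, V (pathCount a k (a k)) (a (k + 1) - a k)
        = ∏ y ∈ s, envMoment P ν (pathCount a n y) := by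
  intro n
  induction n with
  | zero =>
    intro s _
    rw [Finset.prod_range_zero, Finset.prod_eq_one]
    intro y _
    exact envMoment_of_zero P ν (fun g => pathCount_zero a y g)
  | succ n ih =>
    intro s hs
    have hans : a n ∈ s := hs n (Nat.lt_succ_self n)
    have hsn : ∀ k, k < n → a k ∈ s := fun k hk => hs k (hk.trans (Nat.lt_succ_self n))
    rw [Finset.prod_range_succ, ih s hsn]
    have hsupp : (Function.support (pathCount a n (a n))).Finite :=
      pathCount_finite_support a n (a n)
    rw [Finset.prod_eq_mul_prod_sdiff_singleton_of_mem hans,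
      Finset.prod_eq_mul_prod_sdiff_singleton_of_mem hans
        (fun y => envMoment P ν (pathCount a (n + 1) y))]
    have hrest : ∀ y ∈ s \ {a n},
        envMoment P ν (pathCount a (n + 1) y) = envMoment P ν (pathCount a n y) := by
      intro y hy
      rw [Finset.mem_sdiff, Finset.mem_singleton] at hy
      rw [pathCount_succ_ne a n y hy.2]
    rw [Finset.prod_congr rfl hrest, pathCount_succ_self a n]
    rcases lt_or_eq_of_le (envMoment_nonneg P ν h0 (pathCount a n (a n))) with hM | hM
    · rw [hV _ hsupp hM, envMoment1_eq_incr P ν hsupp]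
      have hMne : envMoment P ν (pathCount a n (a n)) ≠ 0 := ne_of_gt hM
      field_simp
    · have hle := envMoment_incr_le P ν hm h0 h1 hsupp (a (n + 1) - a n)
      rw [← hM] at hle
      have hz : envMoment P ν (incr (pathCount a n (a n)) (a (n + 1) - a n)) = 0 :=
        le_antisymm hle (envMoment_nonneg P ν h0 _)
      rw [hz, ← hM]
      ring

end AuxRWRE2
section AuxRWRE3

open MeasureTheory ProbabilityTheory
set_option linter.unusedSectionVars false
set_option linter.unusedVariables false

variable {G Ω : Type*} [AddCommGroup G] [Countable G] [MeasurableSpace G]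
    [MeasurableSingletonClass G] [DecidableEq G] [mΩ : MeasurableSpace Ω]

lemma integral_finset_prod_indep {ι : Type*} {P : Measure Ω} [IsProbabilityMeasure P]
    {W : ι → Ω → ℝ}
    (hindep : iIndepFun W P)
    (hmeas : ∀ i, Measurable (W i)) (h0 : ∀ i ω, 0 ≤ W i ω) (h1 : ∀ i ω, W i ω ≤ 1)
    (s : Finset ι) :
    ∫ ω, ∏ i ∈ s, W i ω ∂P = ∏ i ∈ s, ∫ ω, W i ω ∂P := by
  classical
  induction s using Finset.induction_on with
  | empty => simp
  | @insert i s hi ih =>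
    have hprodfn : (∏ j ∈ s, W j) = fun ω => ∏ j ∈ s, W j ω := by
      funext ω; simp [Finset.prod_apply]
    have hint : Integrable (∏ j ∈ s, W j) P := by
      rw [hprodfn]
      exact integrable_of_bdd (Finset.measurable_prod _ fun j _ => hmeas j)
        (fun ω => Finset.prod_nonneg fun j _ => h0 j ω)
        (fun ω => Finset.prod_le_one (fun j _ => h0 j ω) (fun j _ => h1 j ω))
    have hind := hindep.indepFun_finsetProd_of_notMem hmeas hi
    have hmul := IndepFun.integral_mul_eq_mul_integral hind hint.aestronglyMeasurable
      (integrable_of_bdd (hmeas i) (h0 i) (h1 i)).aestronglyMeasurable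
    calc ∫ ω, ∏ j ∈ insert i s, W j ω ∂P
        = ∫ ω, ((∏ j ∈ s, W j) * W i) ω ∂P := by
          refine integral_congr_ae (Filter.Eventually.of_forall fun ω => ?_)
          simp only [Finset.prod_insert hi, Pi.mul_apply, Finset.prod_apply]
          ring
      _ = (∫ ω, (∏ j ∈ s, W j) ω ∂P) * ∫ ω, W i ω ∂P := hmul
      _ = (∏ j ∈ s, ∫ ω, W j ω ∂P) * ∫ ω, W i ω ∂P := by rw [hprodfn, ih]
      _ = ∏ j ∈ insert i s, ∫ ω, W j ω ∂P := by rw [Finset.prod_insert hi, mul_comm]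

lemma integral_prod_nu (P : Measure Ω) [IsProbabilityMeasure P] (ν : G → G → Ω → ℝ)
    (hindep : iIndepFun (fun x ω e => ν x e ω) P)
    (hident : ∀ x, Measure.map (fun ω (e : G) => ν x e ω) P
      = Measure.map (fun ω (e : G) => ν 0 e ω) P)
    (hm : ∀ x e, Measurable (ν x e)) (h0 : ∀ x e ω, 0 ≤ ν x e ω) (h1 : ∀ x e ω, ν x e ω ≤ 1)
    (a : ℕ → G) (n : ℕ) :
    ∫ ω, ∏ k ∈ Finset.range n, ν (a k) (a (k + 1) - a k) ω ∂P
      = ∏ y ∈ (Finset.range n).image a, envMoment P ν (pathCount a n y) := by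
  classical
  set t := (Finset.range n).image (fun k => a (k + 1) - a k) with htdef
  set s := (Finset.range n).image a with hsdef
  -- the measurable functionals
  set φ : G → (G → ℝ) → ℝ := fun y v => ∏ g ∈ t, v g ^ pathCount a n y g with hφdef
  have hφmeas : ∀ y, Measurable (φ y) := fun y =>
    Finset.measurable_prod _ fun g _ => (measurable_pi_apply g).pow_const _
  -- pointwise rewriting of the integrand
  have hpoint : ∀ ω, ∏ k ∈ Finset.range n, ν (a k) (a (k + 1) - a k) ω
      = ∏ y ∈ s, φ y (fun e => ν y e ω) := by
    intro ω
    rw [← Finset.prod_fiberwise_of_maps_to (g := a) (t := s)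
      (fun k hk => Finset.mem_image_of_mem a hk)
      (fun k => ν (a k) (a (k + 1) - a k) ω)]
    refine Finset.prod_congr rfl fun y hy => ?_
    rw [hφdef]
    dsimp only
    rw [← Finset.prod_fiberwise_of_maps_to (g := fun k => a (k + 1) - a k) (t := t)
      (s := (Finset.range n).filter (fun k => a k = y))
      (fun k hk => Finset.mem_image_of_mem _ (Finset.mem_of_mem_filter k hk))
      (fun k => ν (a k) (a (k + 1) - a k) ω)]
    refine Finset.prod_congr rfl fun g hg => ?_
    have hterm : ∀ k ∈ ((Finset.range n).filter (fun k => a k = y)).filter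
        (fun k => a (k + 1) - a k = g), ν (a k) (a (k + 1) - a k) ω = ν y g ω := by
      intro k hk
      rw [Finset.mem_filter, Finset.mem_filter] at hk
      rw [hk.2, hk.1.2]
    rw [Finset.prod_congr rfl hterm, Finset.prod_const]
    rw [Finset.filter_filter]
    unfold pathCount
    have hfe : Finset.filter (fun l => a l = y ∧ a (l + 1) - a l = g) (Finset.range n)
        = Finset.filter (fun l => a l = y ∧ a (l + 1) = a l + g) (Finset.range n) :=
      Finset.filter_congr fun l _ => and_congr_right fun _ => sub_eq_iff_eq_add'
    rw [hfe]
  rw [integral_congr_ae (Filter.Eventually.of_forall hpoint)]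
  set W : G → Ω → ℝ := fun y ω => φ y (fun e => ν y e ω) with hWdef
  have hWindep : iIndepFun W P :=
    hindep.comp φ hφmeas
  have hWmeas : ∀ y, Measurable (W y) := fun y =>
    (hφmeas y).comp (measurable_pi_lambda _ (fun e => hm y e))
  have hW0 : ∀ y ω, 0 ≤ W y ω := fun y ω =>
    Finset.prod_nonneg fun g _ => pow_nonneg (h0 y g ω) _
  have hW1 : ∀ y ω, W y ω ≤ 1 := fun y ω =>
    Finset.prod_le_one (fun g _ => pow_nonneg (h0 y g ω) _)
      (fun g _ => pow_le_one₀ (h0 y g ω) (h1 y g ω))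
  rw [integral_finset_prod_indep hWindep hWmeas hW0 hW1 s]
  refine Finset.prod_congr rfl fun y hy => ?_
  have hmapmeas : ∀ x : G, Measurable (fun ω (e : G) => ν x e ω) := fun x =>
    measurable_pi_lambda _ (fun e => hm x e)
  have hstep : ∫ ω, W y ω ∂P = ∫ v, φ y v ∂(Measure.map (fun ω (e : G) => ν y e ω) P) := by
    rw [integral_map (hmapmeas y).aemeasurable (hφmeas y).aestronglyMeasurable]
  rw [hstep, hident y, integral_map (hmapmeas 0).aemeasurable (hφmeas y).aestronglyMeasurable,
    envMoment_eq P ν (t := t) (pathCount_support a n y)]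

end AuxRWRE3
section AuxRWRE4

open MeasureTheory ProbabilityTheory
set_option linter.unusedSectionVars false
set_option linter.unusedVariables false

variable {G Ω : Type*} [AddCommGroup G] [Countable G] [MeasurableSpace G]
    [MeasurableSingletonClass G] [DecidableEq G] [mΩ : MeasurableSpace Ω]

lemma natFilt_le {X : ℕ → Ω → G} (hX : ∀ n, Measurable (X n)) (n : ℕ) :
    natFilt X n ≤ mΩ :=
  iSup_le fun i => iSup_le fun _ => (hX i).comap_le

lemma measurable_natFilt (X : ℕ → Ω → G) {n i : ℕ} (hi : i ≤ n) :
    Measurable[natFilt X n] (X i) :=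
  Measurable.of_comap_le
    (le_iSup₂ (f := fun i (_ : i ∈ Set.Iic n) => MeasurableSpace.comap (X i) inferInstance) i hi)

lemma cylSet_mem_natFilt (X : ℕ → Ω → G) (a : ℕ → G) (n : ℕ) :
    MeasurableSet[natFilt X n] (cylSet X a n) := by
  have hset : cylSet X a n = ⋂ k ∈ Set.Iic n, X k ⁻¹' {a k} := by
    ext ω; simp [cylSet, Set.mem_iInter, Set.mem_Iic]
  rw [hset]
  exact MeasurableSet.biInter (Set.to_countable _)
    (fun k hk => measurable_natFilt X hk (measurableSet_G _))

lemma cylSet_measurableSet {X : ℕ → Ω → G} (hX : ∀ n, Measurable (X n)) (a : ℕ → G) (n : ℕ) :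
    MeasurableSet (cylSet X a n) :=
  natFilt_le hX n _ (cylSet_mem_natFilt X a n)

lemma cylSet_zero {X : ℕ → Ω → G} (hstart : ∀ ω, X 0 ω = 0) {a : ℕ → G} (ha : a 0 = 0) :
    cylSet X a 0 = Set.univ := by
  ext ω
  simp only [cylSet, Set.mem_setOf_eq, Set.mem_univ, iff_true]
  intro k hk
  rw [Nat.le_zero] at hk
  subst hk
  rw [hstart ω, ha]

lemma cylSet_succ (X : ℕ → Ω → G) (a : ℕ → G) (n : ℕ) :
    cylSet X a (n + 1) = cylSet X a n ∩ X (n + 1) ⁻¹' {a (n + 1)} := by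
  ext ω
  simp only [cylSet, Set.mem_inter_iff, Set.mem_setOf_eq, Set.mem_preimage,
    Set.mem_singleton_iff]
  constructor
  · exact fun h => ⟨fun k hk => h k (hk.trans n.le_succ), h (n + 1) le_rfl⟩
  · rintro ⟨h1, h2⟩ k hk
    rcases Nat.lt_succ_iff_lt_or_eq.mp (Nat.lt_succ_of_le hk) with h | h
    · exact h1 k (Nat.lt_succ_iff.mp h)
    · rw [h]; exact h2

lemma jumpCount_on_cyl {X : ℕ → Ω → G} {a : ℕ → G} {n : ℕ} {ω : Ω}
    (hω : ω ∈ cylSet X a n) :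
    (fun g => jumpCount X g (X n ω) n ω) = pathCount a n (a n) := by
  funext g
  unfold jumpCount pathCount
  rw [hω n le_rfl]
  congr 1
  refine Finset.filter_congr fun l hl => ?_
  rw [Finset.mem_range] at hl
  rw [hω l hl.le, hω (l + 1) hl]

lemma envSigma_le {ν : G → G → Ω → ℝ} (hm : ∀ x e, Measurable (ν x e)) :
    envSigma ν ≤ mΩ :=
  iSup_le fun x => (measurable_pi_lambda _ (hm x)).comap_le

lemma measurable_envSigma {ν : G → G → Ω → ℝ} (x e : G) :
    Measurable[envSigma ν] (fun ω => ν x e ω) := by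
  have hF : Measurable[envSigma ν] (fun ω (e : G) => ν x e ω) :=
    Measurable.of_comap_le
      (le_iSup (fun x => MeasurableSpace.comap (fun ω (e : G) => ν x e ω) inferInstance) x)
  exact (measurable_pi_apply e).comp hF

/-- The key annealed identity for the RWRE. -/
lemma rwre_integral (P : Measure Ω) [IsProbabilityMeasure P] (ν : G → G → Ω → ℝ)
    (X : ℕ → Ω → G) (hX : IsRWRE P ν X) (a : ℕ → G) (ha : a 0 = 0) :
    ∀ n, ∀ f : Ω → ℝ, Measurable[envSigma ν] f → (∀ ω, 0 ≤ f ω) → (∀ ω, f ω ≤ 1) →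
      ∫ ω, (cylSet X a n).indicator f ω ∂P
        = ∫ ω, (∏ k ∈ Finset.range n, ν (a k) (a (k + 1) - a k) ω) * f ω ∂P := by
  have hν1 : ∀ x e ω, ν x e ω ≤ 1 := fun x e ω =>
    le_hasSum (hX.sum_one x ω) e (fun i _ => hX.nonneg x i ω)
  have henv_le : envSigma ν ≤ mΩ := envSigma_le hX.meas_nu
  intro n
  induction n with
  | zero =>
    intro f hf hf0 hf1
    rw [cylSet_zero hX.start ha]
    simp [Set.indicator_univ]
  | succ n ih =>
    intro f hf hf0 hf1
    have hm_le : envSigma ν ⊔ natFilt X n ≤ mΩ := sup_le henv_le (natFilt_le hX.meas_X n)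
    have hle2 : natFilt X n ≤ envSigma ν ⊔ natFilt X n := le_sup_right
    set e : G := a (n + 1) - a n with hedef
    set A : Set Ω := {ω' | X (n + 1) ω' = a n + e} with hAdef
    have hAeq : X (n + 1) ⁻¹' {a (n + 1)} = A := by
      ext ω
      simp only [Set.mem_preimage, Set.mem_singleton_iff, hAdef, Set.mem_setOf_eq, hedef]
      constructor
      · intro h; rw [h]; abel
      · intro h; rw [h]; abel
    have hAmeas : MeasurableSet A := by
      rw [← hAeq]; exact hX.meas_X (n + 1) (measurableSet_G _)
    set h : Ω → ℝ := (cylSet X a n).indicator f with hhdef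
    have hcylm : MeasurableSet[natFilt X n] (cylSet X a n) := cylSet_mem_natFilt X a n
    have hcylm' : MeasurableSet[envSigma ν ⊔ natFilt X n] (cylSet X a n) := hle2 _ hcylm
    have hcylmΩ : MeasurableSet (cylSet X a n) := hm_le _ hcylm'
    have hfm : Measurable[envSigma ν ⊔ natFilt X n] f := hf.mono le_sup_left le_rfl
    have hhm : Measurable[envSigma ν ⊔ natFilt X n] h := (hfm.indicator hcylm')
    have hhmeas : Measurable h := hhm.mono hm_le le_rfl
    have hh0 : ∀ ω, 0 ≤ h ω := fun ω => Set.indicator_nonneg (fun x _ => hf0 x) ω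
    have hh1 : ∀ ω, h ω ≤ 1 := fun ω => Set.indicator_le' (fun x _ => hf1 x) (fun _ _ => zero_le_one) ω
    have hindA : ∀ ω, (0:ℝ) ≤ A.indicator (fun _ => (1:ℝ)) ω :=
      fun ω => Set.indicator_nonneg (fun _ _ => zero_le_one) ω
    have hindA1 : ∀ ω, A.indicator (fun _ => (1:ℝ)) ω ≤ 1 :=
      fun ω => Set.indicator_le' (fun _ _ => le_rfl) (fun _ _ => zero_le_one) ω
    have hintA : Integrable (A.indicator (fun _ => (1:ℝ))) P :=
      integrable_of_bdd ((measurable_const (a := (1:ℝ))).indicator hAmeas) hindA hindA1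
    have hinth : Integrable (h * A.indicator (fun _ => (1:ℝ))) P :=
      integrable_of_bdd (hhmeas.mul ((measurable_const (a := (1:ℝ))).indicator hAmeas))
        (fun ω => mul_nonneg (hh0 ω) (hindA ω))
        (fun ω => mul_le_one₀ (hh1 ω) (hindA ω) (hindA1 ω))
    -- step 1: rewrite the indicator of the bigger cylinder
    have hconv : ∀ ω, (cylSet X a (n + 1)).indicator f ω
        = (h * A.indicator (fun _ => (1:ℝ))) ω := by
      intro ω
      rw [cylSet_succ, hAeq]
      by_cases hω : ω ∈ cylSet X a n
      · by_cases hω' : ω ∈ A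
        · rw [Set.indicator_of_mem (Set.mem_inter hω hω')]
          simp [hhdef, Set.indicator_of_mem hω, Set.indicator_of_mem hω']
        · rw [Set.indicator_of_notMem (fun hc => hω' hc.2)]
          simp [hhdef, Set.indicator_of_notMem hω']
      · rw [Set.indicator_of_notMem (fun hc => hω hc.1)]
        simp [hhdef, Set.indicator_of_notMem hω]
    rw [integral_congr_ae (Filter.Eventually.of_forall hconv)]
    -- step 2: condition on m and use the quenched law
    have hpull : P[h * A.indicator (fun _ => (1:ℝ)) | envSigma ν ⊔ natFilt X n]
        =ᵐ[P] h * P[A.indicator (fun _ => (1:ℝ)) | envSigma ν ⊔ natFilt X n] :=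
      condExp_mul_of_stronglyMeasurable_left (hhm.stronglyMeasurable) hinth hintA
    have hq := hX.quenched n (a n) e
    have hae : h * P[A.indicator (fun _ => (1:ℝ)) | envSigma ν ⊔ natFilt X n]
        =ᵐ[P] fun ω => h ω * ν (a n) e ω := by
      filter_upwards [hq] with ω hω
      by_cases hmem : ω ∈ cylSet X a n
      · have hXn : X n ω = a n := hmem n le_rfl
        have := hω hXn
        simp only [Pi.mul_apply]
        rw [this]
      · simp only [Pi.mul_apply, hhdef, Set.indicator_of_notMem hmem, zero_mul]
    calc ∫ ω, (h * A.indicator (fun _ => (1:ℝ))) ω ∂P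
        = ∫ ω, (P[h * A.indicator (fun _ => (1:ℝ)) | envSigma ν ⊔ natFilt X n]) ω ∂P :=
          (integral_condExp hm_le).symm
      _ = ∫ ω, h ω * ν (a n) e ω ∂P := integral_congr_ae (hpull.trans hae)
      _ = ∫ ω, (cylSet X a n).indicator (fun ω => ν (a n) e ω * f ω) ω ∂P := by
          refine integral_congr_ae (Filter.Eventually.of_forall fun ω => ?_)
          by_cases hmem : ω ∈ cylSet X a n
          · simp [hhdef, Set.indicator_of_mem hmem]; ring
          · simp [hhdef, Set.indicator_of_notMem hmem]
      _ = ∫ ω, (∏ k ∈ Finset.range n, ν (a k) (a (k + 1) - a k) ω) * (ν (a n) e ω * f ω) ∂P := by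
          refine ih _ ((measurable_envSigma (a n) e).mul hf) ?_ ?_
          · exact fun ω => mul_nonneg (hX.nonneg _ _ _) (hf0 ω)
          · exact fun ω => mul_le_one₀ (hν1 _ _ _) (hf0 ω) (hf1 ω)
      _ = ∫ ω, (∏ k ∈ Finset.range (n + 1), ν (a k) (a (k + 1) - a k) ω) * f ω ∂P := by
          refine integral_congr_ae (Filter.Eventually.of_forall fun ω => ?_)
          dsimp only
          rw [Finset.prod_range_succ, ← hedef]
          ring

end AuxRWRE4
section AuxRWRE5

open MeasureTheory ProbabilityTheory
set_option linter.unusedSectionVars false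
set_option linter.unusedVariables false

variable {G Ω' : Type*} [AddCommGroup G] [Countable G] [MeasurableSpace G]
    [MeasurableSingletonClass G] [DecidableEq G] [mΩ' : MeasurableSpace Ω']

lemma rrw_prob (P' : Measure Ω') [IsProbabilityMeasure P'] (V : (G → ℕ) → G → ℝ)
    (Y : ℕ → Ω' → G) (hY : IsRRW P' V Y) (a : ℕ → G) (ha : a 0 = 0) :
    ∀ n, (P' (cylSet Y a n)).toReal
      = ∏ k ∈ Finset.range n, V (pathCount a k (a k)) (a (k + 1) - a k) := by
  intro n
  induction n with
  | zero =>
    rw [cylSet_zero hY.start ha]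
    simp
  | succ n ih =>
    have hm_le : natFilt Y n ≤ mΩ' := natFilt_le hY.meas_X n
    have hcylm : MeasurableSet[natFilt Y n] (cylSet Y a n) := cylSet_mem_natFilt Y a n
    have hcylmΩ : MeasurableSet (cylSet Y a n) := hm_le _ hcylm
    set e : G := a (n + 1) - a n with hedef
    set A : Set Ω' := {ω' | Y (n + 1) ω' = Y n ω' + e} with hAdef
    have hAmeas : MeasurableSet A := by
      have hun : A = ⋃ g : G, (Y n ⁻¹' {g} ∩ Y (n + 1) ⁻¹' {g + e}) := by
        ext ω
        simp only [hAdef, Set.mem_setOf_eq, Set.mem_iUnion, Set.mem_inter_iff, Set.mem_preimage,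
          Set.mem_singleton_iff]
        constructor
        · intro hω; exact ⟨Y n ω, rfl, hω⟩
        · rintro ⟨g, hg1, hg2⟩; rw [hg2, hg1]
      rw [hun]
      exact MeasurableSet.iUnion fun g =>
        ((hY.meas_X n (measurableSet_G _)).inter (hY.meas_X (n + 1) (measurableSet_G _)))
    set h : Ω' → ℝ := (cylSet Y a n).indicator (fun _ => (1:ℝ)) with hhdef
    have hhm : Measurable[natFilt Y n] h := measurable_const.indicator hcylm
    have hhmeas : Measurable h := measurable_const.indicator hcylmΩ
    have hh0 : ∀ ω, (0:ℝ) ≤ h ω := fun ω => Set.indicator_nonneg (fun _ _ => zero_le_one) ω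
    have hh1 : ∀ ω, h ω ≤ 1 := fun ω => Set.indicator_le' (fun _ _ => le_rfl) (fun _ _ => zero_le_one) ω
    have hindA : ∀ ω, (0:ℝ) ≤ A.indicator (fun _ => (1:ℝ)) ω :=
      fun ω => Set.indicator_nonneg (fun _ _ => zero_le_one) ω
    have hindA1 : ∀ ω, A.indicator (fun _ => (1:ℝ)) ω ≤ 1 :=
      fun ω => Set.indicator_le' (fun _ _ => le_rfl) (fun _ _ => zero_le_one) ω
    have hintA : Integrable (A.indicator (fun _ => (1:ℝ))) P' :=
      integrable_of_bdd (measurable_const.indicator hAmeas) hindA hindA1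
    have hinth : Integrable (h * A.indicator (fun _ => (1:ℝ))) P' :=
      integrable_of_bdd (hhmeas.mul (measurable_const.indicator hAmeas))
        (fun ω => mul_nonneg (hh0 ω) (hindA ω))
        (fun ω => mul_le_one₀ (hh1 ω) (hindA ω) (hindA1 ω))
    have hconv : ∀ ω, (cylSet Y a (n + 1)).indicator (fun _ => (1:ℝ)) ω
        = (h * A.indicator (fun _ => (1:ℝ))) ω := by
      intro ω
      rw [cylSet_succ]
      by_cases hω : ω ∈ cylSet Y a n
      · have hYn : Y n ω = a n := hω n le_rfl
        by_cases hω' : Y (n + 1) ω = a (n + 1)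
        · have hA : ω ∈ A := by
            rw [hAdef]; simp only [Set.mem_setOf_eq]; rw [hω', hYn, hedef]; abel
          rw [Set.indicator_of_mem (Set.mem_inter hω (by exact hω'))]
          simp [hhdef, Set.indicator_of_mem hω, Set.indicator_of_mem hA]
        · have hA : ω ∉ A := by
            rw [hAdef]; simp only [Set.mem_setOf_eq]; rw [hYn]
            intro hc; apply hω'; rw [hc, hedef]; abel
          have hnot : ω ∉ cylSet Y a n ∩ Y (n + 1) ⁻¹' {a (n + 1)} := fun hc => hω' hc.2
          rw [Set.indicator_of_notMem hnot]
          simp [hhdef, Set.indicator_of_notMem hA]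
      · have hnot : ω ∉ cylSet Y a n ∩ Y (n + 1) ⁻¹' {a (n + 1)} := fun hc => hω hc.1
        rw [Set.indicator_of_notMem hnot]
        simp [hhdef, Set.indicator_of_notMem hω]
    have hpull : P'[h * A.indicator (fun _ => (1:ℝ)) | natFilt Y n]
        =ᵐ[P'] h * P'[A.indicator (fun _ => (1:ℝ)) | natFilt Y n] :=
      condExp_mul_of_stronglyMeasurable_left hhm.stronglyMeasurable hinth hintA
    have hstep := hY.step n e
    have hae : h * P'[A.indicator (fun _ => (1:ℝ)) | natFilt Y n]
        =ᵐ[P'] fun ω => h ω * V (pathCount a n (a n)) e := by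
      filter_upwards [hstep] with ω hω
      by_cases hmem : ω ∈ cylSet Y a n
      · simp only [Pi.mul_apply]
        rw [hω, jumpCount_on_cyl hmem]
      · simp only [Pi.mul_apply, hhdef, Set.indicator_of_notMem hmem, zero_mul]
    calc (P' (cylSet Y a (n + 1))).toReal
        = ∫ ω, (cylSet Y a (n + 1)).indicator (fun _ => (1:ℝ)) ω ∂P' :=
          (integral_indicator_one (cylSet_measurableSet hY.meas_X a (n + 1))).symm
      _ = ∫ ω, (h * A.indicator (fun _ => (1:ℝ))) ω ∂P' :=
          integral_congr_ae (Filter.Eventually.of_forall hconv)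
      _ = ∫ ω, (P'[h * A.indicator (fun _ => (1:ℝ)) | natFilt Y n]) ω ∂P' :=
          (integral_condExp hm_le).symm
      _ = ∫ ω, h ω * V (pathCount a n (a n)) e ∂P' := integral_congr_ae (hpull.trans hae)
      _ = (∫ ω, h ω ∂P') * V (pathCount a n (a n)) e := integral_mul_const _ _
      _ = (P' (cylSet Y a n)).toReal * V (pathCount a n (a n)) e := by
          rw [show (∫ ω, h ω ∂P') = (P' (cylSet Y a n)).toReal from integral_indicator_one hcylmΩ]
      _ = ∏ k ∈ Finset.range (n + 1), V (pathCount a k (a k)) (a (k + 1) - a k) := by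
          rw [ih, Finset.prod_range_succ]

end AuxRWRE5
section AuxRWRE6

open MeasureTheory ProbabilityTheory
set_option linter.unusedSectionVars false
set_option linter.unusedVariables false

variable {G : Type*} [AddCommGroup G] [Countable G] [MeasurableSpace G]
    [MeasurableSingletonClass G] [DecidableEq G]

/-- The collection of elementary cylinders in path space. -/
def cylCol (G : Type*) : Set (Set (ℕ → G)) :=
  {S | ∃ (n : ℕ) (a : ℕ → G), S = {f : ℕ → G | ∀ k ≤ n, f k = a k}}

lemma isPiSystem_cylCol : IsPiSystem (cylCol G) := by
  rintro S1 ⟨n, a, rfl⟩ S2 ⟨m, b, rfl⟩ hne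
  obtain ⟨f0, hf1, hf2⟩ := hne
  rcases le_total n m with h | h
  · have hsub : {f : ℕ → G | ∀ k ≤ m, f k = b k} ⊆ {f | ∀ k ≤ n, f k = a k} := by
      intro f hf k hk
      calc f k = b k := hf k (hk.trans h)
        _ = f0 k := (hf2 k (hk.trans h)).symm
        _ = a k := hf1 k hk
    rw [Set.inter_eq_self_of_subset_right hsub]
    exact ⟨m, b, rfl⟩
  · have hsub : {f : ℕ → G | ∀ k ≤ n, f k = a k} ⊆ {f | ∀ k ≤ m, f k = b k} := by
      intro f hf k hk
      calc f k = a k := hf k (hk.trans h)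
        _ = f0 k := (hf1 k (hk.trans h)).symm
        _ = b k := hf2 k hk
    rw [Set.inter_eq_self_of_subset_left hsub]
    exact ⟨n, a, rfl⟩

lemma cylFun_measurableSet (n : ℕ) (a : ℕ → G) :
    MeasurableSet {f : ℕ → G | ∀ k ≤ n, f k = a k} := by
  have hset : {f : ℕ → G | ∀ k ≤ n, f k = a k}
      = ⋂ k ∈ Set.Iic n, (fun f : ℕ → G => f k) ⁻¹' {a k} := by
    ext f; simp [Set.mem_Iic]
  rw [hset]
  exact MeasurableSet.biInter (Set.to_countable _)
    (fun k _ => measurable_pi_apply k (measurableSet_G {a k}))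

lemma single_mem_generateFrom (k : ℕ) (g : G) :
    MeasurableSet[MeasurableSpace.generateFrom (cylCol G)] {f : ℕ → G | f k = g} := by
  classical
  have hset : {f : ℕ → G | f k = g}
      = ⋃ v : {v : Fin (k + 1) → G // v ⟨k, Nat.lt_succ_self k⟩ = g},
        {f : ℕ → G | ∀ i ≤ k,
          f i = (fun i : ℕ => if h : i ≤ k then v.1 ⟨i, Nat.lt_succ_of_le h⟩ else 0) i} := by
    ext f
    simp only [Set.mem_setOf_eq, Set.mem_iUnion]
    constructor
    · intro hf
      refine ⟨⟨fun i => f i.1, hf⟩, ?_⟩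
      intro i hi
      simp [dif_pos hi]
    · rintro ⟨v, hv⟩
      have hk := hv k le_rfl
      rw [hk]
      simpa using v.2
  rw [hset]
  exact MeasurableSet.iUnion fun v =>
    MeasurableSpace.measurableSet_generateFrom ⟨k, _, rfl⟩

lemma generateFrom_cylCol :
    (inferInstance : MeasurableSpace (ℕ → G)) = MeasurableSpace.generateFrom (cylCol G) := by
  refine le_antisymm ?_ ?_
  · have heval : ∀ k : ℕ,
        Measurable[MeasurableSpace.generateFrom (cylCol G)] (fun f : ℕ → G => f k) := by
      intro k s hs
      have hset : (fun f : ℕ → G => f k) ⁻¹' s = ⋃ g ∈ s, {f : ℕ → G | f k = g} := by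
        ext f; simp
      rw [hset]
      exact MeasurableSet.biUnion (Set.to_countable s)
        fun g _ => single_mem_generateFrom k g
    exact iSup_le fun k => (heval k).comap_le
  · refine MeasurableSpace.generateFrom_le ?_
    rintro S ⟨n, a, rfl⟩
    exact cylFun_measurableSet n a

end AuxRWRE6
/-- the annealed law of a RWRE coincides with the law of the edge-oriented
reinforced random walk whose reinforcement function is the ratio of environment moments. -/
theorem annealed_eq_reinforced {G Ω Ω' : Type*} [AddCommGroup G] [Countable G]
    [MeasurableSpace G] [MeasurableSingletonClass G] [DecidableEq G]
    [mΩ : MeasurableSpace Ω] [mΩ' : MeasurableSpace Ω']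
    (P : Measure Ω) [IsProbabilityMeasure P] (ν : G → G → Ω → ℝ) (X : ℕ → Ω → G)
    (hX : IsRWRE P ν X)
    (P' : Measure Ω') [IsProbabilityMeasure P'] (V : (G → ℕ) → G → ℝ) (Y : ℕ → Ω' → G)
    (hV : ∀ nv : G → ℕ, (Function.support nv).Finite → 0 < envMoment P ν nv →
      ∀ e, V nv e = envMoment1 P ν nv e / envMoment P ν nv)
    (hY : IsRRW P' V Y) :
    Measure.map (fun ω (n : ℕ) => X n ω) P = Measure.map (fun ω (n : ℕ) => Y n ω) P' := by
  classical
  have hν1 : ∀ x e ω, ν x e ω ≤ 1 := fun x e ω =>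
    le_hasSum (hX.sum_one x ω) e (fun i _ => hX.nonneg x i ω)
  have hXmeas : Measurable (fun ω (n : ℕ) => X n ω) := measurable_pi_lambda _ hX.meas_X
  have hYmeas : Measurable (fun ω (n : ℕ) => Y n ω) := measurable_pi_lambda _ hY.meas_X
  haveI hP1 : IsProbabilityMeasure (Measure.map (fun ω (n : ℕ) => X n ω) P) :=
    Measure.isProbabilityMeasure_map hXmeas.aemeasurable
  haveI hP2 : IsProbabilityMeasure (Measure.map (fun ω (n : ℕ) => Y n ω) P') :=
    Measure.isProbabilityMeasure_map hYmeas.aemeasurable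
  refine ext_of_generate_finite (cylCol G) generateFrom_cylCol isPiSystem_cylCol ?_ ?_
  · rintro S ⟨n, a, rfl⟩
    rw [Measure.map_apply hXmeas (cylFun_measurableSet n a),
      Measure.map_apply hYmeas (cylFun_measurableSet n a)]
    have hpreX : (fun ω (n : ℕ) => X n ω) ⁻¹' {f | ∀ k ≤ n, f k = a k} = cylSet X a n := rfl
    have hpreY : (fun ω (n : ℕ) => Y n ω) ⁻¹' {f | ∀ k ≤ n, f k = a k} = cylSet Y a n := rfl
    rw [hpreX, hpreY]
    by_cases ha : a 0 = 0
    · have h1 : (P (cylSet X a n)).toReal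
          = ∏ y ∈ (Finset.range n).image a, envMoment P ν (pathCount a n y) := by
        have hkey := rwre_integral P ν X hX a ha n (fun _ => 1) measurable_const
          (fun _ => zero_le_one) (fun _ => le_rfl)
        have hL : ∫ ω, (cylSet X a n).indicator (fun _ => (1:ℝ)) ω ∂P
            = (P (cylSet X a n)).toReal :=
          integral_indicator_one (cylSet_measurableSet hX.meas_X a n)
        have hR : ∫ ω, (∏ k ∈ Finset.range n, ν (a k) (a (k + 1) - a k) ω) * 1 ∂P
            = ∏ y ∈ (Finset.range n).image a, envMoment P ν (pathCount a n y) := by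
          rw [← integral_prod_nu P ν hX.indep_sites hX.ident_sites hX.meas_nu hX.nonneg hν1 a n]
          refine integral_congr_ae (Filter.Eventually.of_forall fun ω => ?_)
          simp
        rw [← hL, hkey, hR]
      have h2 : (P' (cylSet Y a n)).toReal
          = ∏ y ∈ (Finset.range n).image a, envMoment P ν (pathCount a n y) := by
        rw [rrw_prob P' V Y hY a ha n]
        exact telescopeV P ν (hX.meas_nu 0) (fun e ω => hX.nonneg 0 e ω)
          (fun e ω => hν1 0 e ω) hV a n _
          (fun k hk => Finset.mem_image_of_mem a (Finset.mem_range.mpr hk))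
      exact (ENNReal.toReal_eq_toReal_iff' (measure_ne_top P _) (measure_ne_top P' _)).mp
        (h1.trans h2.symm)
    · have hX0 : cylSet X a n = ∅ := by
        ext ω
        simp only [cylSet, Set.mem_setOf_eq, Set.mem_empty_iff_false, iff_false]
        intro h
        exact ha (by rw [← h 0 (Nat.zero_le n), hX.start ω])
      have hY0 : cylSet Y a n = ∅ := by
        ext ω
        simp only [cylSet, Set.mem_setOf_eq, Set.mem_empty_iff_false, iff_false]
        intro h
        exact ha (by rw [← h 0 (Nat.zero_le n), hY.start ω])
      rw [hX0, hY0]; simp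
  · simp
end

section
/- If U_1, ..., U_l are nonnegative random variables with U_1 + ⋯ + U_l ≤ 1 almost surely, then for Lebesgue-almost all (a_1,...,a_l) ∈ R^l, P(U_1 < a_1, ..., U_l < a_l) = lim_{n→∞} Σ {n!/(k_0! ⋯ k_l!) · E[(1 − U_1 − ⋯ − U_l)^{k_0} U_1^{k_1} ⋯ U_l^{k_l}]}, where the sum ranges over nonnegative integers k_0,...,k_l with k_0 + ⋯ + k_l = n and k_j/n < a_j for each 1 ≤ j ≤ l. In particular, the joint moments of (U_1,...,U_l) determine their joint law. -/
open MeasureTheory ProbabilityTheory Filter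

namespace MMF
open Finset
variable {l : ℕ}

def Sfin (l n : ℕ) : Finset (Fin l → ℕ) :=
  (Fintype.piFinset fun _ : Fin l => Finset.range (n+1)).filter fun k => ∑ j, k j ≤ n

noncomputable def coef (n : ℕ) (k : Fin l → ℕ) : ℝ :=
  (n.factorial : ℝ) / ((n - ∑ j, k j).factorial * ∏ j, (k j).factorial)

lemma key (u : Fin l → ℝ) (t : ℝ) (n : ℕ) :
    ∑ k ∈ Sfin l n, coef n k * (t ^ (n - ∑ j, k j) * ∏ j, u j ^ k j) = (t + ∑ j, u j) ^ n := by
  classical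
  have h : t + ∑ j, u j = ∑ o ∈ (univ : Finset (Option (Fin l))), Option.elim o t u := by
    rw [Fintype.sum_option]; simp only [Option.elim_none, Option.elim_some]
  rw [h, Finset.sum_pow_eq_sum_piAntidiag]
  refine (Finset.sum_nbij' (i := fun K (j : Fin l) => K (some j))
    (j := fun k o => Option.elim o (n - ∑ j, k j) k) ?_ ?_ ?_ ?_ ?_).symm
  · intro K hK
    rw [Finset.mem_piAntidiag] at hK
    have hs : ∑ o : Option (Fin l), K o = n := hK.1
    rw [Fintype.sum_option] at hs
    simp only [Sfin, Finset.mem_filter, Fintype.mem_piFinset, Finset.mem_range]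
    have hj : ∀ j, K (some j) ≤ ∑ i, K (some i) :=
      fun j => Finset.single_le_sum (f := fun i => K (some i)) (fun i _ => Nat.zero_le _) (mem_univ j)
    exact ⟨fun j => by have := hj j; omega, by omega⟩
  · intro k hk
    simp only [Sfin, Finset.mem_filter, Fintype.mem_piFinset, Finset.mem_range] at hk
    rw [Finset.mem_piAntidiag]
    refine ⟨?_, fun o _ => Finset.mem_univ o⟩
    rw [Fintype.sum_option]
    simp only [Option.elim]
    omega
  · intro K hK
    rw [Finset.mem_piAntidiag] at hK
    funext o
    cases o with
    | none =>
      have hs : ∑ o : Option (Fin l), K o = n := hK.1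
      rw [Fintype.sum_option] at hs
      simp only [Option.elim]
      omega
    | some j => simp [Option.elim]
  · intro k _; funext j; simp [Option.elim]
  · intro K hK
    rw [Finset.mem_piAntidiag] at hK
    have hs : ∑ o : Option (Fin l), K o = n := hK.1
    rw [Fintype.sum_option] at hs
    have hco : (Nat.multinomial (univ : Finset (Option (Fin l))) K : ℝ)
        = coef n (fun j => K (some j)) := by
      have hspec := Nat.multinomial_spec (univ : Finset (Option (Fin l))) K
      have hprod : ∏ o : Option (Fin l), (K o).factorial
          = (K none).factorial * ∏ j, (K (some j)).factorial := by
        rw [Fintype.prod_option]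
      have hsum : ∑ o : Option (Fin l), K o = n := hK.1
      have hkey : (K none).factorial * (∏ j, (K (some j)).factorial)
          * Nat.multinomial univ K = n.factorial := by
        rw [← hprod, hspec, hsum]
      unfold coef
      have hKn : K none = n - ∑ j, K (some j) := by omega
      beta_reduce
      rw [← hKn, eq_div_iff (by positivity)]
      push_cast [← hkey]
      ring
    rw [hco]
    have : ∏ o : Option (Fin l), Option.elim o t u ^ K o
        = t ^ (n - ∑ j, K (some j)) * ∏ j, u j ^ K (some j) := by
      rw [Fintype.prod_option]
      simp only [Option.elim]
      congr 2
      omega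
    rw [this]


noncomputable def W (u : Fin l → ℝ) (n : ℕ) (k : Fin l → ℕ) : ℝ :=
  coef n k * ((1 - ∑ j, u j) ^ (n - ∑ j, k j) * ∏ j, u j ^ k j)

lemma sum_W (u : Fin l → ℝ) (n : ℕ) : ∑ k ∈ Sfin l n, W u n k = 1 := by
  have := key u (1 - ∑ j, u j) n
  simp only [sub_add_cancel, one_pow] at this
  exact this

noncomputable def Bc (u : Fin l → ℝ) (j : Fin l) (n : ℕ) (k : Fin l → ℕ) : ℝ :=
  coef n k * ((1 - ∑ i, u i) ^ (n - ∑ i, k i) * ∏ i ∈ Finset.univ.erase j, u i ^ k i)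

lemma W_eq_B (u : Fin l → ℝ) (j : Fin l) (n : ℕ) (k : Fin l → ℕ) :
    W u n k = Bc u j n k * u j ^ k j := by
  unfold W Bc
  rw [← Finset.mul_prod_erase univ (fun i => u i ^ k i) (mem_univ j)]
  ring

lemma keyx (u : Fin l → ℝ) (j : Fin l) (n : ℕ) (x : ℝ) :
    ∑ k ∈ Sfin l n, Bc u j n k * x ^ k j = ((1 - u j) + x) ^ n := by
  classical
  have h := key (Function.update u j x) (1 - ∑ i, u i) n
  have h1 : ∑ i, Function.update u j x i = x + ∑ i ∈ univ.erase j, u i := by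
    rw [Finset.sum_update_of_mem (mem_univ j), Finset.sdiff_singleton_eq_erase]
  have h2 : ∑ i ∈ univ.erase j, u i = (∑ i, u i) - u j :=
    Finset.sum_erase_eq_sub (mem_univ j)
  have h3 : ∀ k : Fin l → ℕ,
      ∏ i, Function.update u j x i ^ k i = x ^ k j * ∏ i ∈ univ.erase j, u i ^ k i := by
    intro k
    rw [← Finset.mul_prod_erase univ (fun i => Function.update u j x i ^ k i) (mem_univ j)]
    rw [Function.update_self]
    congr 1
    exact Finset.prod_congr rfl fun i hi =>
      by rw [Function.update_of_ne (Finset.ne_of_mem_erase hi)]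
  rw [h1, h2] at h
  have : (1 - ∑ i, u i) + (x + ((∑ i, u i) - u j)) = (1 - u j) + x := by ring
  rw [this] at h
  rw [← h]
  refine Finset.sum_congr rfl fun k _ => ?_
  rw [h3 k]
  unfold Bc
  ring

lemma D1 (u : Fin l → ℝ) (j : Fin l) (n : ℕ) (x : ℝ) :
    ∑ k ∈ Sfin l n, Bc u j n k * (↑(k j) * x ^ (k j - 1))
      = (n : ℝ) * ((1 - u j) + x) ^ (n - 1) := by
  have hfun : (fun y => ∑ k ∈ Sfin l n, Bc u j n k * y ^ k j)
      = fun y => ((1 - u j) + y) ^ n := funext fun y => keyx u j n y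
  have h1 : HasDerivAt (fun y => ∑ k ∈ Sfin l n, Bc u j n k * y ^ k j)
      (∑ k ∈ Sfin l n, Bc u j n k * (↑(k j) * x ^ (k j - 1))) x :=
    HasDerivAt.fun_sum fun k _ => HasDerivAt.const_mul (Bc u j n k) (hasDerivAt_pow (k j) x)
  have h2 : HasDerivAt (fun y => ((1 - u j) + y) ^ n)
      ((n : ℝ) * ((1 - u j) + x) ^ (n - 1) * 1) x :=
    HasDerivAt.fun_pow ((hasDerivAt_id x).const_add (1 - u j)) n
  rw [hfun] at h1
  have := h1.unique h2
  rw [this, mul_one]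

lemma D2 (u : Fin l → ℝ) (j : Fin l) (n : ℕ) (x : ℝ) :
    ∑ k ∈ Sfin l n, Bc u j n k * (↑(k j) * (↑(k j - 1) * x ^ (k j - 1 - 1)))
      = (n : ℝ) * (↑(n - 1) * ((1 - u j) + x) ^ (n - 1 - 1)) := by
  have hfun : (fun y => ∑ k ∈ Sfin l n, Bc u j n k * (↑(k j) * y ^ (k j - 1)))
      = fun y => (n : ℝ) * ((1 - u j) + y) ^ (n - 1) := funext fun y => D1 u j n y
  have h1 : HasDerivAt (fun y => ∑ k ∈ Sfin l n, Bc u j n k * (↑(k j) * y ^ (k j - 1)))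
      (∑ k ∈ Sfin l n, Bc u j n k * (↑(k j) * (↑(k j - 1) * x ^ (k j - 1 - 1)))) x := by
    refine HasDerivAt.fun_sum fun k _ => ?_
    exact HasDerivAt.const_mul (Bc u j n k)
      (HasDerivAt.const_mul (↑(k j)) (hasDerivAt_pow (k j - 1) x))
  have h2 : HasDerivAt (fun y => (n : ℝ) * ((1 - u j) + y) ^ (n - 1))
      ((n : ℝ) * (↑(n - 1) * ((1 - u j) + x) ^ (n - 1 - 1) * 1)) x :=
    HasDerivAt.const_mul (n : ℝ) (HasDerivAt.fun_pow ((hasDerivAt_id x).const_add (1 - u j)) (n - 1))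
  rw [hfun] at h1
  have := h1.unique h2
  rw [this, mul_one]

lemma M1 (u : Fin l → ℝ) (j : Fin l) (n : ℕ) :
    ∑ k ∈ Sfin l n, W u n k * ↑(k j) = (n : ℝ) * u j := by
  have h := D1 u j n (u j)
  have h2 : (1 - u j) + u j = 1 := by ring
  rw [h2, one_pow, mul_one] at h
  calc ∑ k ∈ Sfin l n, W u n k * ↑(k j)
      = ∑ k ∈ Sfin l n, u j * (Bc u j n k * (↑(k j) * u j ^ (k j - 1))) := by
        refine Finset.sum_congr rfl fun k _ => ?_
        rw [W_eq_B u j n k]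
        rcases Nat.eq_zero_or_pos (k j) with h0 | h0
        · simp [h0]
        · have : u j ^ k j = u j ^ (k j - 1) * u j := by
            rw [← pow_succ]; congr 1; omega
          rw [this]; ring
    _ = u j * ∑ k ∈ Sfin l n, Bc u j n k * (↑(k j) * u j ^ (k j - 1)) := by
        rw [Finset.mul_sum]
    _ = u j * (n : ℝ) := by rw [h]
    _ = (n : ℝ) * u j := by ring

lemma M2 (u : Fin l → ℝ) (j : Fin l) (n : ℕ) :
    ∑ k ∈ Sfin l n, W u n k * (↑(k j) * ↑(k j - 1)) = (n : ℝ) * ↑(n - 1) * u j ^ 2 := by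
  have h := D2 u j n (u j)
  have h2 : (1 - u j) + u j = 1 := by ring
  rw [h2, one_pow, mul_one] at h
  calc ∑ k ∈ Sfin l n, W u n k * (↑(k j) * ↑(k j - 1))
      = ∑ k ∈ Sfin l n, u j ^ 2 * (Bc u j n k * (↑(k j) * (↑(k j - 1) * u j ^ (k j - 1 - 1)))) := by
        refine Finset.sum_congr rfl fun k _ => ?_
        rw [W_eq_B u j n k]
        match hkj : k j with
        | 0 => simp
        | 1 => simp
        | (m+2) =>
          have : u j ^ (m + 2) = u j ^ (m + 2 - 1 - 1) * u j ^ 2 := by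
            rw [← pow_add]
            norm_num
          rw [this]
          push_cast
          ring
    _ = u j ^ 2 * ∑ k ∈ Sfin l n, Bc u j n k * (↑(k j) * (↑(k j - 1) * u j ^ (k j - 1 - 1))) := by
        rw [Finset.mul_sum]
    _ = u j ^ 2 * ((n : ℝ) * ↑(n - 1)) := by rw [h]
    _ = (n : ℝ) * ↑(n - 1) * u j ^ 2 := by ring

lemma VAR (u : Fin l → ℝ) (j : Fin l) (n : ℕ) :
    ∑ k ∈ Sfin l n, W u n k * ((k j : ℝ) - n * u j) ^ 2
      = (n : ℝ) * u j * (1 - u j) := by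
  have expand : ∀ k : ℕ, ((k : ℝ) - n * u j) ^ 2
      = (k : ℝ) * ↑(k - 1) + (1 - 2 * (n : ℝ) * u j) * (k : ℝ) + (n : ℝ) ^ 2 * u j ^ 2 := by
    intro k
    match k with
    | 0 => simp; ring
    | (m+1) => push_cast; ring
  have hsplit : ∑ k ∈ Sfin l n, W u n k * ((k j : ℝ) - n * u j) ^ 2
      = (∑ k ∈ Sfin l n, W u n k * ((k j : ℝ) * ↑(k j - 1)))
        + (1 - 2 * (n : ℝ) * u j) * (∑ k ∈ Sfin l n, W u n k * (k j : ℝ))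
        + (n : ℝ) ^ 2 * u j ^ 2 * (∑ k ∈ Sfin l n, W u n k) := by
    rw [Finset.mul_sum, Finset.mul_sum, ← Finset.sum_add_distrib, ← Finset.sum_add_distrib]
    refine Finset.sum_congr rfl fun k _ => ?_
    rw [expand (k j)]
    ring
  rw [hsplit, M1, M2, sum_W]
  match n with
  | 0 => simp
  | (m+1) =>
    push_cast
    ring


lemma W_nonneg (u : Fin l → ℝ) (h0 : ∀ i, 0 ≤ u i) (h1 : ∑ i, u i ≤ 1)
    (n : ℕ) (k : Fin l → ℕ) : 0 ≤ W u n k := by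
  unfold W coef
  refine mul_nonneg (div_nonneg (by positivity) (by positivity)) (mul_nonneg ?_ ?_)
  · exact pow_nonneg (by linarith) _
  · exact Finset.prod_nonneg fun i _ => pow_nonneg (h0 i) _

lemma cheb (u : Fin l → ℝ) (h0 : ∀ i, 0 ≤ u i) (h1 : ∑ i, u i ≤ 1) (j : Fin l)
    (n : ℕ) (hn : 1 ≤ n) (ε : ℝ) (hε : 0 < ε) (p : (Fin l → ℕ) → Prop) [DecidablePred p]
    (hp : ∀ k ∈ Sfin l n, p k → ε * n ≤ |(k j : ℝ) - n * u j|) :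
    ∑ k ∈ (Sfin l n).filter p, W u n k ≤ 1 / (ε ^ 2 * n) := by
  have hnR : (0:ℝ) < n := by exact_mod_cast Nat.lt_of_lt_of_le Nat.zero_lt_one hn
  have huj1 : u j ≤ 1 :=
    le_trans (Finset.single_le_sum (fun i _ => h0 i) (mem_univ j)) h1
  have hS : 0 ≤ ∑ k ∈ (Sfin l n).filter p, W u n k :=
    Finset.sum_nonneg fun k _ => W_nonneg u h0 h1 n k
  have key1 : (ε ^ 2 * n ^ 2) * ∑ k ∈ (Sfin l n).filter p, W u n k
      ≤ (n : ℝ) * u j * (1 - u j) := by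
    calc (ε ^ 2 * n ^ 2) * ∑ k ∈ (Sfin l n).filter p, W u n k
        = ∑ k ∈ (Sfin l n).filter p, W u n k * (ε * n) ^ 2 := by
          rw [Finset.mul_sum]; exact Finset.sum_congr rfl fun k _ => by ring
      _ ≤ ∑ k ∈ (Sfin l n).filter p, W u n k * ((k j : ℝ) - n * u j) ^ 2 := by
          refine Finset.sum_le_sum fun k hk => ?_
          rw [Finset.mem_filter] at hk
          refine mul_le_mul_of_nonneg_left ?_ (W_nonneg u h0 h1 n k)
          have habs := hp k hk.1 hk.2
          calc (ε * n) ^ 2 ≤ |(k j : ℝ) - n * u j| ^ 2 :=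
                pow_le_pow_left₀ (by positivity) habs 2
            _ = ((k j : ℝ) - n * u j) ^ 2 := sq_abs _
      _ ≤ ∑ k ∈ Sfin l n, W u n k * ((k j : ℝ) - n * u j) ^ 2 :=
          Finset.sum_le_sum_of_subset_of_nonneg (Finset.filter_subset _ _)
            (fun k _ _ => mul_nonneg (W_nonneg u h0 h1 n k) (sq_nonneg _))
      _ = (n : ℝ) * u j * (1 - u j) := VAR u j n
  rw [le_div_iff₀ (by positivity)]
  have h2 : (n:ℝ) * u j * (1 - u j) ≤ n := by
    have h3 : u j * (1 - u j) ≤ 1 := by nlinarith [h0 j, huj1]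
    calc (n:ℝ) * u j * (1 - u j) = (n:ℝ) * (u j * (1 - u j)) := by ring
      _ ≤ (n:ℝ) * 1 := mul_le_mul_of_nonneg_left h3 (le_of_lt hnR)
      _ = n := mul_one _
  nlinarith [key1, h2, hnR, hS]

lemma tendsto_Fsum (u a : Fin l → ℝ) (h0 : ∀ i, 0 ≤ u i) (h1 : ∑ i, u i ≤ 1)
    (hne : ∀ j, u j ≠ a j) :
    Tendsto (fun n : ℕ => ∑ k ∈ (Sfin l n).filter (fun k => ∀ j, (k j : ℝ) / n < a j), W u n k)
      atTop (nhds (if ∀ j, u j < a j then 1 else 0)) := by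
  classical
  set G := fun n : ℕ => ∑ k ∈ (Sfin l n).filter (fun k => ∀ j, (k j : ℝ) / n < a j), W u n k
    with hGdef
  by_cases hall : ∀ j, u j < a j
  · rw [if_pos hall]
    set C := ∑ j, 1 / (a j - u j) ^ 2 with hC
    have hCj : ∀ j : Fin l, 0 < a j - u j := fun j => sub_pos.2 (hall j)
    have hbound : ∀ n : ℕ, 1 ≤ n → ‖G n - 1‖ ≤ C / n := by
      intro n hn
      have hnR : (0:ℝ) < n := by exact_mod_cast Nat.lt_of_lt_of_le Nat.zero_lt_one hn
      have hG_le : G n ≤ 1 := by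
        rw [← sum_W u n]
        exact Finset.sum_le_sum_of_subset_of_nonneg (Finset.filter_subset _ _)
          (fun k _ _ => W_nonneg u h0 h1 n k)
      have hsplit : 1 - G n
          = ∑ k ∈ (Sfin l n).filter (fun k => ¬ ∀ j, (k j : ℝ) / n < a j), W u n k := by
        have h := Finset.sum_filter_add_sum_filter_not (Sfin l n)
          (fun k => ∀ j, (k j : ℝ) / n < a j) (W u n)
        have h2 := sum_W u n
        rw [hGdef]
        dsimp only
        linarith
      have hub : ∑ k ∈ (Sfin l n).filter (fun k => ¬ ∀ j, (k j : ℝ) / n < a j), W u n k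
          ≤ ∑ j, ∑ k ∈ (Sfin l n).filter (fun k => a j ≤ (k j : ℝ) / n), W u n k := by
        calc ∑ k ∈ (Sfin l n).filter (fun k => ¬ ∀ j, (k j : ℝ) / n < a j), W u n k
            ≤ ∑ k ∈ (Sfin l n).filter (fun k => ¬ ∀ j, (k j : ℝ) / n < a j),
                ∑ j, if a j ≤ (k j : ℝ) / n then W u n k else 0 := by
              refine Finset.sum_le_sum fun k hk => ?_
              rw [Finset.mem_filter] at hk
              push_neg at hk
              obtain ⟨j0, hj0⟩ := hk.2
              calc W u n k = if a j0 ≤ (k j0 : ℝ) / n then W u n k else 0 :=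
                    (if_pos hj0).symm
                _ ≤ ∑ j, if a j ≤ (k j : ℝ) / n then W u n k else 0 :=
                    Finset.single_le_sum
                      (f := fun j => if a j ≤ (k j : ℝ) / n then W u n k else 0)
                      (fun i _ => by
                        split_ifs
                        · exact W_nonneg u h0 h1 n k
                        · exact le_rfl)
                      (mem_univ j0)
          _ = ∑ j, ∑ k ∈ ((Sfin l n).filter
                (fun k => ¬ ∀ j, (k j : ℝ) / n < a j)).filter
                (fun k => a j ≤ (k j : ℝ) / n), W u n k := by
              rw [Finset.sum_comm]
              exact Finset.sum_congr rfl fun j _ => (Finset.sum_filter _ _).symm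
          _ ≤ ∑ j, ∑ k ∈ (Sfin l n).filter (fun k => a j ≤ (k j : ℝ) / n), W u n k := by
              refine Finset.sum_le_sum fun j _ => ?_
              refine Finset.sum_le_sum_of_subset_of_nonneg ?_
                (fun k _ _ => W_nonneg u h0 h1 n k)
              intro k hk
              rw [Finset.mem_filter] at hk ⊢
              rw [Finset.mem_filter] at hk
              exact ⟨hk.1.1, hk.2⟩
      have hub2 : ∀ j : Fin l,
          ∑ k ∈ (Sfin l n).filter (fun k => a j ≤ (k j : ℝ) / n), W u n k
            ≤ 1 / (a j - u j) ^ 2 / n := by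
        intro j
        have := cheb u h0 h1 j n hn (a j - u j) (hCj j)
          (fun k => a j ≤ (k j : ℝ) / n)
          (fun k hk hpk => by
            have hk2 : a j * n ≤ (k j : ℝ) := (le_div_iff₀ hnR).1 hpk
            have : (a j - u j) * n ≤ (k j : ℝ) - n * u j := by nlinarith
            exact le_trans this (le_abs_self _))
        calc ∑ k ∈ (Sfin l n).filter (fun k => a j ≤ (k j : ℝ) / n), W u n k
            ≤ 1 / ((a j - u j) ^ 2 * n) := this
          _ = 1 / (a j - u j) ^ 2 / n := by rw [div_div]
      have : ‖G n - 1‖ = 1 - G n := by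
        rw [Real.norm_eq_abs, abs_sub_comm, abs_of_nonneg (by linarith)]
      rw [this, hsplit]
      calc ∑ k ∈ (Sfin l n).filter (fun k => ¬ ∀ j, (k j : ℝ) / n < a j), W u n k
          ≤ ∑ j, ∑ k ∈ (Sfin l n).filter (fun k => a j ≤ (k j : ℝ) / n), W u n k := hub
        _ ≤ ∑ j, 1 / (a j - u j) ^ 2 / n := Finset.sum_le_sum fun j _ => hub2 j
        _ = C / n := by rw [hC, Finset.sum_div]
    have hCn : Tendsto (fun n : ℕ => C / n) atTop (nhds 0) :=
      tendsto_const_div_atTop_nhds_zero_nat C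
    have h5 : Tendsto (fun n => G n - 1) atTop (nhds 0) :=
      squeeze_zero_norm' (Filter.eventually_atTop.2 ⟨1, hbound⟩) hCn
    have h6 := h5.add (tendsto_const_nhds (x := (1:ℝ)))
    simpa using h6
  · rw [if_neg hall]
    push_neg at hall
    obtain ⟨j0, hj0⟩ := hall
    have hj0' : a j0 < u j0 := lt_of_le_of_ne hj0 fun h => hne j0 h.symm
    set ε := u j0 - a j0 with hεdef
    have hε : 0 < ε := sub_pos.2 hj0'
    have hbound : ∀ n : ℕ, 1 ≤ n → ‖G n‖ ≤ 1 / ε ^ 2 / n := by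
      intro n hn
      have hnR : (0:ℝ) < n := by exact_mod_cast Nat.lt_of_lt_of_le Nat.zero_lt_one hn
      have hGnn : 0 ≤ G n := Finset.sum_nonneg fun k _ => W_nonneg u h0 h1 n k
      have hsub : G n ≤ ∑ k ∈ (Sfin l n).filter (fun k => (k j0 : ℝ) / n < a j0), W u n k := by
        refine Finset.sum_le_sum_of_subset_of_nonneg ?_
          (fun k _ _ => W_nonneg u h0 h1 n k)
        refine Finset.monotone_filter_right _ ?_
        intro k _ hk
        exact hk j0
      have hch := cheb u h0 h1 j0 n hn ε hε (fun k => (k j0 : ℝ) / n < a j0)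
        (fun k hk hpk => by
          have hk2 : (k j0 : ℝ) < a j0 * n := (div_lt_iff₀ hnR).1 hpk
          refine le_abs.2 (Or.inr ?_)
          rw [hεdef]
          nlinarith)
      rw [Real.norm_eq_abs, abs_of_nonneg hGnn]
      calc G n ≤ _ := hsub
        _ ≤ 1 / (ε ^ 2 * n) := hch
        _ = 1 / ε ^ 2 / n := by rw [div_div]
    have hCn : Tendsto (fun n : ℕ => 1 / ε ^ 2 / n) atTop (nhds 0) :=
      tendsto_const_div_atTop_nhds_zero_nat _
    exact squeeze_zero_norm' (Filter.eventually_atTop.2 ⟨1, hbound⟩) hCn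


end MMF

open Finset MMF

/-- if `U_1,…,U_l` are nonnegative random variables with `U_1+⋯+U_l ≤ 1` a.s.,
then for Lebesgue-a.e. `(a_1,…,a_l)`, `P(U_1<a_1,…,U_l<a_l)` is the limit of the multinomial
moment sums; in particular the joint moments determine the joint law. -/
theorem multinomial_moment_formula {Ω : Type*} [mΩ : MeasurableSpace Ω]
    (P : Measure Ω) [IsProbabilityMeasure P] (l : ℕ) (U : Fin l → Ω → ℝ)
    (hmeas : ∀ j, Measurable (U j)) (hnn : ∀ j, ∀ᵐ ω ∂P, 0 ≤ U j ω)
    (hsum : ∀ᵐ ω ∂P, ∑ j, U j ω ≤ 1) :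
    ∀ᵐ a ∂(volume : Measure (Fin l → ℝ)),
      Filter.Tendsto
        (fun n : ℕ =>
          ∑ k ∈ (Fintype.piFinset fun _ : Fin l => Finset.range (n + 1)).filter
              (fun k => (∑ j, k j) ≤ n ∧ ∀ j, (k j : ℝ) / n < a j),
            ((n.factorial : ℝ) /
                ((n - ∑ j, k j).factorial * ∏ j, (k j).factorial)) *
              ∫ ω, (1 - ∑ j, U j ω) ^ (n - ∑ j, k j) * ∏ j, U j ω ^ k j ∂P)
        Filter.atTop (nhds ((P {ω | ∀ j, U j ω < a j}).toReal)) := by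
  classical
  -- countability of atoms
  have hcnt : ∀ j : Fin l, Set.Countable {t : ℝ | 0 < P (U j ⁻¹' {t})} := by
    intro j
    exact Measure.countable_meas_pos_of_disjoint_of_meas_iUnion_ne_top P
      (fun t => hmeas j (measurableSet_singleton t))
      (fun t t' htt' => Set.disjoint_left.2 fun ω h1 h2 => htt' (by
        simp only [Set.mem_preimage, Set.mem_singleton_iff] at h1 h2
        rw [← h1, ← h2]))
      (measure_ne_top P _)
  have hnull : ∀ j : Fin l,
      (volume : Measure (Fin l → ℝ)) {a | 0 < P (U j ⁻¹' {a j})} = 0 := by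
    intro j
    have : {a : Fin l → ℝ | 0 < P (U j ⁻¹' {a j})}
        = ⋃ t ∈ {t : ℝ | 0 < P (U j ⁻¹' {t})}, {a : Fin l → ℝ | a j = t} := by
      ext b
      simp only [Set.mem_setOf_eq, Set.mem_iUnion]
      constructor
      · intro h; exact ⟨b j, h, rfl⟩
      · rintro ⟨t, ht, rfl⟩; exact ht
    rw [this, measure_biUnion_null_iff (hcnt j)]
    intro t _
    rw [MeasureTheory.volume_pi]
    exact Measure.pi_hyperplane (fun _ : Fin l => (volume : Measure ℝ)) j t
  have hgood : ∀ᵐ a ∂(volume : Measure (Fin l → ℝ)), ∀ j, P (U j ⁻¹' {a j}) = 0 := by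
    rw [MeasureTheory.ae_all_iff]
    intro j
    have := hnull j
    rw [MeasureTheory.ae_iff]
    convert this using 2
    ext b
    simp only [Set.mem_setOf_eq, not_not]
    constructor
    · intro h; exact lt_of_le_of_ne (by positivity) (Ne.symm h)
    · intro h; exact h.ne'
  filter_upwards [hgood] with a hga
  -- the good event in Ω
  have haeU : ∀ᵐ ω ∂P, (∀ j, 0 ≤ U j ω) ∧ (∑ j, U j ω ≤ 1) ∧ (∀ j, U j ω ≠ a j) := by
    have h1 : ∀ᵐ ω ∂P, ∀ j, 0 ≤ U j ω := (MeasureTheory.ae_all_iff).2 hnn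
    have h2 : ∀ᵐ ω ∂P, ∀ j, U j ω ≠ a j := by
      rw [MeasureTheory.ae_all_iff]
      intro j
      rw [MeasureTheory.ae_iff]
      simp only [not_not]; exact hga j
    filter_upwards [h1, hsum, h2] with ω hω1 hω2 hω3
    exact ⟨hω1, hω2, hω3⟩
  -- measurability of the basic integrands
  have gmeas : ∀ (n : ℕ) (k : Fin l → ℕ),
      Measurable (fun ω => (1 - ∑ j, U j ω) ^ (n - ∑ j, k j) * ∏ j, U j ω ^ k j) := by
    intro n k
    refine Measurable.mul ?_ ?_
    · exact ((measurable_const.sub (Finset.measurable_sum univ fun j _ => hmeas j)).pow_const _)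
    · exact Finset.measurable_prod univ fun j _ => (hmeas j).pow_const _
  have gint : ∀ (n : ℕ) (k : Fin l → ℕ),
      Integrable (fun ω => (1 - ∑ j, U j ω) ^ (n - ∑ j, k j) * ∏ j, U j ω ^ k j) P := by
    intro n k
    refine Integrable.mono' (integrable_const 1) (gmeas n k).aestronglyMeasurable ?_
    filter_upwards [haeU] with ω hω
    have h0 := hω.1
    have h1 := hω.2.1
    have hub : ∀ j, U j ω ≤ 1 := fun j =>
      le_trans (Finset.single_le_sum (fun i _ => h0 i) (mem_univ j)) h1
    have hf1 : (0:ℝ) ≤ (1 - ∑ j, U j ω) ^ (n - ∑ j, k j) := pow_nonneg (by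
      have : (0:ℝ) ≤ 1 - ∑ j, U j ω := by linarith
      exact this) _
    have hf2 : (1 - ∑ j, U j ω) ^ (n - ∑ j, k j) ≤ 1 := pow_le_one₀ (by linarith) (by
      have : (0:ℝ) ≤ ∑ j, U j ω := Finset.sum_nonneg fun j _ => h0 j
      linarith)
    have hg1 : (0:ℝ) ≤ ∏ j, U j ω ^ k j :=
      Finset.prod_nonneg fun j _ => pow_nonneg (h0 j) _
    have hg2 : ∏ j, U j ω ^ k j ≤ 1 :=
      Finset.prod_le_one (fun j _ => pow_nonneg (h0 j) _)
        (fun j _ => pow_le_one₀ (h0 j) (hub j))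
    rw [Real.norm_eq_abs, abs_of_nonneg (mul_nonneg hf1 hg1)]
    calc (1 - ∑ j, U j ω) ^ (n - ∑ j, k j) * ∏ j, U j ω ^ k j
        ≤ 1 * 1 := mul_le_mul hf2 hg2 hg1 (by norm_num)
      _ = 1 := by norm_num
  -- the integral form
  set F : ℕ → Ω → ℝ := fun n ω =>
    ∑ k ∈ (Sfin l n).filter (fun k => ∀ j, (k j : ℝ) / n < a j), W (fun j => U j ω) n k
    with hF
  have hsum_eq : ∀ n : ℕ,
      (∑ k ∈ (Fintype.piFinset fun _ : Fin l => Finset.range (n + 1)).filter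
              (fun k => (∑ j, k j) ≤ n ∧ ∀ j, (k j : ℝ) / n < a j),
            ((n.factorial : ℝ) /
                ((n - ∑ j, k j).factorial * ∏ j, (k j).factorial)) *
              ∫ ω, (1 - ∑ j, U j ω) ^ (n - ∑ j, k j) * ∏ j, U j ω ^ k j ∂P)
        = ∫ ω, F n ω ∂P := by
    intro n
    rw [hF]
    have hfs : (Fintype.piFinset fun _ : Fin l => Finset.range (n + 1)).filter
              (fun k => (∑ j, k j) ≤ n ∧ ∀ j, (k j : ℝ) / n < a j)
        = (Sfin l n).filter (fun k => ∀ j, (k j : ℝ) / n < a j) := by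
      rw [Sfin, Finset.filter_filter]
    rw [hfs]
    dsimp only
    rw [MeasureTheory.integral_finset_sum _
      (fun k _ => show Integrable (fun ω => W (fun j => U j ω) n k) P from
        (gint n k).const_mul (coef n k))]
    refine Finset.sum_congr rfl fun k _ => ?_
    simp only [W]
    rw [integral_const_mul]
    rfl
  have hSmeas : MeasurableSet {ω | ∀ j, U j ω < a j} := by
    have : {ω | ∀ j, U j ω < a j} = ⋂ j, {ω | U j ω < a j} := by
      ext ω; simp
    rw [this]
    exact MeasurableSet.iInter fun j => measurableSet_lt (hmeas j) measurable_const
  -- dominated convergence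
  have hdct : Tendsto (fun n => ∫ ω, F n ω ∂P) atTop
      (nhds (∫ ω, (if ∀ j, U j ω < a j then (1:ℝ) else 0) ∂P)) := by
    refine MeasureTheory.tendsto_integral_of_dominated_convergence (fun _ => (1:ℝ))
      ?_ (integrable_const 1) ?_ ?_
    · intro n
      refine (Finset.measurable_sum _ fun k _ => ?_).aestronglyMeasurable
      exact (gmeas n k).const_mul (coef n k)
    · intro n
      filter_upwards [haeU] with ω hω
      have h0 := hω.1
      have h1 := hω.2.1
      have hFnn : 0 ≤ F n ω :=
        Finset.sum_nonneg fun k _ => W_nonneg _ h0 h1 n k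
      have hFle : F n ω ≤ 1 := by
        rw [hF]
        dsimp only
        rw [← sum_W (fun j => U j ω) n]
        exact Finset.sum_le_sum_of_subset_of_nonneg (Finset.filter_subset _ _)
          (fun k _ _ => W_nonneg _ h0 h1 n k)
      rw [Real.norm_eq_abs, abs_of_nonneg hFnn]
      exact hFle
    · filter_upwards [haeU] with ω hω
      exact tendsto_Fsum (fun j => U j ω) a hω.1 hω.2.1 hω.2.2
  have hlim : ∫ ω, (if ∀ j, U j ω < a j then (1:ℝ) else 0) ∂P
      = (P {ω | ∀ j, U j ω < a j}).toReal := by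
    have : (fun ω => if ∀ j, U j ω < a j then (1:ℝ) else 0)
        = Set.indicator {ω | ∀ j, U j ω < a j} (fun _ => (1:ℝ)) := by
      funext ω
      rw [Set.indicator_apply]
      simp only [Set.mem_setOf_eq]
    rw [this, MeasureTheory.integral_indicator_const _ hSmeas]
    simp
    rfl
  rw [← hlim]
  have : (fun n : ℕ =>
          ∑ k ∈ (Fintype.piFinset fun _ : Fin l => Finset.range (n + 1)).filter
              (fun k => (∑ j, k j) ≤ n ∧ ∀ j, (k j : ℝ) / n < a j),
            ((n.factorial : ℝ) /
                ((n - ∑ j, k j).factorial * ∏ j, (k j).factorial)) *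
              ∫ ω, (1 - ∑ j, U j ω) ^ (n - ∑ j, k j) * ∏ j, U j ω ^ k j ∂P)
      = fun n => ∫ ω, F n ω ∂P := funext hsum_eq
  rw [this]
  exact hdct
end
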